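/- arXiv:2106.00340 — 4 statements merged into one kernel-verified Lean document; each statement's English description precedes it below -/
import Mathlib

section
/- Let D be a squarefree product of distinct odd primes p_1,...,p_n. For d' in the subgroup of Q×/Q×² generated by -1 and the p_i, define f_i(d') = (d'/p_i) if p_i does not divide d', and f_i(d') = (-2D/(d'))/p_i) (Legendre symbol of -2D/d' mod p_i) if p_i divides d'. Then f_i is multiplicative: f_i(d'_1)f_i(d'_2) = f_i(d'_1 d'_2) for all d'_1, d'_2 in this subgroup (computed modulo squares). -/
/-- Square classes in the subgroup of `ℚ×/ℚ×²` generated by `-1, p₁, …, pₙ` are represented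
by a sign `ε` and a subset `S` of prime indices. -/
def sqClassVal {n : ℕ} (p : Fin n → ℕ) (ε : Bool) (S : Finset (Fin n)) : ℤ :=
  (if ε then -1 else 1) * ∏ i ∈ S, (p i : ℤ)

/-- The map `f_i`: the Legendre symbol `(d'/pᵢ)` if `pᵢ ∤ d'`, and `((-2D/d')/pᵢ)` if `pᵢ ∣ d'`. -/
def fMap {n : ℕ} (p : Fin n → ℕ) (hp : ∀ i, (p i).Prime) (D : ℤ) (i : Fin n)
    (ε : Bool) (S : Finset (Fin n)) : ℤ :=
  if i ∈ S then @legendreSym (p i) ⟨hp i⟩ (-2 * D / sqClassVal p ε S)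
  else @legendreSym (p i) ⟨hp i⟩ (sqClassVal p ε S)

theorem prodAux {α M : Type*} [DecidableEq α] [CommMonoid M] (S T : Finset α) (f : α → M) :
    (∏ j ∈ S, f j) * ∏ j ∈ T, f j = (∏ j ∈ symmDiff S T, f j) * (∏ j ∈ S ∩ T, f j)^2 := by
  have h1 : (∏ j ∈ S, f j) = (∏ j ∈ S \ T, f j) * ∏ j ∈ S ∩ T, f j := by
    rw [← Finset.prod_union (Finset.disjoint_sdiff_inter S T), Finset.sdiff_union_inter]
  have h2 : (∏ j ∈ T, f j) = (∏ j ∈ T \ S, f j) * ∏ j ∈ S ∩ T, f j := by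
    rw [Finset.inter_comm, ← Finset.prod_union (Finset.disjoint_sdiff_inter T S),
      Finset.sdiff_union_inter]
  have hs : (∏ j ∈ symmDiff S T, f j) = (∏ j ∈ S \ T, f j) * ∏ j ∈ T \ S, f j := by
    rw [show symmDiff S T = (S \ T) ∪ (T \ S) from rfl, Finset.prod_union]
    exact disjoint_sdiff_sdiff
  rw [h1, h2, hs, sq]; exact mul_mul_mul_comm _ _ _ _

theorem notdvdAux {n : ℕ} (p : Fin n → ℕ) (hp : ∀ i, (p i).Prime)
    (hinj : Function.Injective p) (i : Fin n) (T : Finset (Fin n)) (hi : i ∉ T) :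
    ((∏ j ∈ T, (p j : ℤ) : ℤ) : ZMod (p i)) ≠ 0 := by
  have : ¬ ((p i : ℤ) ∣ ∏ j ∈ T, (p j : ℤ)) := by
    refine (Nat.prime_iff_prime_int.mp (hp i)).not_dvd_finset_prod fun j hj hdvd => ?_
    have : p i = p j := (Nat.prime_dvd_prime_iff_eq (hp i) (hp j)).mp (by exact_mod_cast hdvd)
    exact hi (hinj this ▸ hj)
  rwa [Ne, ZMod.intCast_zmod_eq_zero_iff_dvd]

theorem legKey {n : ℕ} (p : Fin n → ℕ) (hp : ∀ i, (p i).Prime) (i : Fin n)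
    (A B C t : ℤ) (h : A * B = C * t ^ 2) (ht : ((t : ℤ) : ZMod (p i)) ≠ 0) :
    @legendreSym (p i) ⟨hp i⟩ A * @legendreSym (p i) ⟨hp i⟩ B = @legendreSym (p i) ⟨hp i⟩ C := by
  haveI : Fact (p i).Prime := ⟨hp i⟩
  rw [← legendreSym.mul, h, legendreSym.mul, legendreSym.sq_one' (p := p i) ht, mul_one]

theorem wvalAux {n : ℕ} (p : Fin n → ℕ) (hp : ∀ i, (p i).Prime) (D : ℤ)
    (hD : D = ∏ i, (p i : ℤ)) (ε : Bool) (S : Finset (Fin n)) :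
    -2 * D / sqClassVal p ε S = (if ε then 1 else -1) * (2 * ∏ j ∈ Sᶜ, (p j : ℤ)) := by
  have hP : (∏ j ∈ S, (p j : ℤ)) ≠ 0 := by
    rw [Finset.prod_ne_zero_iff]
    exact fun j _ => by exact_mod_cast (hp j).pos.ne'
  have hD' : -2 * D = (-2 * ∏ j ∈ Sᶜ, (p j : ℤ)) * ∏ j ∈ S, (p j : ℤ) := by
    rw [hD, ← Finset.prod_mul_prod_compl S]; ring
  cases ε
  · rw [sqClassVal, if_neg (by decide), if_neg (by decide), one_mul, hD',
      Int.mul_ediv_cancel _ hP]; ring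
  · rw [sqClassVal, if_pos rfl, if_pos rfl, neg_one_mul, hD', Int.ediv_neg,
      Int.mul_ediv_cancel _ hP]; ring

/-- `f_i` is multiplicative on the subgroup of `ℚ×/ℚ×²` generated by `-1` and the `pᵢ`:
`f_i(d'₁) f_i(d'₂) = f_i(d'₁ d'₂)`, where the product of square classes is computed via
sign multiplication and symmetric difference of the supporting sets of primes. -/
theorem stmt_4 (n : ℕ) (p : Fin n → ℕ) (hp : ∀ i, (p i).Prime)
    (hodd : ∀ i, p i % 2 = 1) (hinj : Function.Injective p)
    (D : ℤ) (hD : D = ∏ i, (p i : ℤ)) (i : Fin n)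
    (ε₁ ε₂ : Bool) (S₁ S₂ : Finset (Fin n)) :
    fMap p hp D i ε₁ S₁ * fMap p hp D i ε₂ S₂ = fMap p hp D i (xor ε₁ ε₂) (symmDiff S₁ S₂) := by
  haveI : Fact (p i).Prime := ⟨hp i⟩
  have h2z : ((2 : ℤ) : ZMod (p i)) ≠ 0 := by
    rw [Ne, ZMod.intCast_zmod_eq_zero_iff_dvd]
    intro hdvd
    have hle : (p i : ℤ) ≤ 2 := Int.le_of_dvd (by norm_num) hdvd
    have hle' : p i ≤ 2 := by exact_mod_cast hle
    have := (hp i).two_le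
    have := hodd i
    omega
  by_cases h1 : i ∈ S₁ <;> by_cases h2 : i ∈ S₂
  · -- both in
    have hΔ : i ∉ symmDiff S₁ S₂ := by simp [Finset.mem_symmDiff, h1, h2]
    simp only [fMap, if_pos h1, if_pos h2, if_neg hΔ,
      wvalAux p hp D hD ε₁ S₁, wvalAux p hp D hD ε₂ S₂]
    refine legKey p hp i _ _ _ (2 * ∏ j ∈ S₁ᶜ ∩ S₂ᶜ, (p j : ℤ)) ?_ ?_
    · have hset : symmDiff S₁ᶜ S₂ᶜ = symmDiff S₁ S₂ := by
        ext j; simp only [Finset.mem_symmDiff, Finset.mem_compl]; tauto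
      have hpp := prodAux S₁ᶜ S₂ᶜ (fun j => (p j : ℤ))
      rw [hset] at hpp
      simp only [sqClassVal]
      cases ε₁ <;> cases ε₂ <;> norm_num <;>
        first
          | linear_combination (4 : ℤ) * hpp
          | linear_combination (-4 : ℤ) * hpp
    · rw [Int.cast_mul]
      exact mul_ne_zero h2z (notdvdAux p hp hinj i _ (by simp [h1]))
  · -- i ∈ S₁, i ∉ S₂
    have hΔ : i ∈ symmDiff S₁ S₂ := Finset.mem_symmDiff.mpr (Or.inl ⟨h1, h2⟩)
    simp only [fMap, if_pos h1, if_neg h2, if_pos hΔ,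
      wvalAux p hp D hD ε₁ S₁, wvalAux p hp D hD (xor ε₁ ε₂) (symmDiff S₁ S₂)]
    refine legKey p hp i _ _ _ (∏ j ∈ S₁ᶜ ∩ S₂, (p j : ℤ)) ?_ ?_
    · have hset : symmDiff S₁ᶜ S₂ = (symmDiff S₁ S₂)ᶜ := by
        ext j; simp only [Finset.mem_symmDiff, Finset.mem_compl]; tauto
      have hpp := prodAux S₁ᶜ S₂ (fun j => (p j : ℤ))
      rw [hset, compl_symmDiff] at hpp
      simp only [sqClassVal]
      cases ε₁ <;> cases ε₂ <;> norm_num <;>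
        first
          | linear_combination (2 : ℤ) * hpp
          | linear_combination (-2 : ℤ) * hpp
    · exact notdvdAux p hp hinj i _ (by simp [h1])
  · -- i ∉ S₁, i ∈ S₂
    have hΔ : i ∈ symmDiff S₁ S₂ := Finset.mem_symmDiff.mpr (Or.inr ⟨h2, h1⟩)
    simp only [fMap, if_neg h1, if_pos h2, if_pos hΔ,
      wvalAux p hp D hD ε₂ S₂, wvalAux p hp D hD (xor ε₁ ε₂) (symmDiff S₁ S₂)]
    refine legKey p hp i _ _ _ (∏ j ∈ S₁ ∩ S₂ᶜ, (p j : ℤ)) ?_ ?_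
    · have hset : symmDiff S₁ S₂ᶜ = (symmDiff S₁ S₂)ᶜ := by
        ext j; simp only [Finset.mem_symmDiff, Finset.mem_compl]; tauto
      have hpp := prodAux S₁ S₂ᶜ (fun j => (p j : ℤ))
      rw [hset, compl_symmDiff] at hpp
      simp only [sqClassVal]
      cases ε₁ <;> cases ε₂ <;> norm_num <;>
        first
          | linear_combination (2 : ℤ) * hpp
          | linear_combination (-2 : ℤ) * hpp
    · exact notdvdAux p hp hinj i _ (by simp [h2])
  · -- neither
    have hΔ : i ∉ symmDiff S₁ S₂ := by simp [Finset.mem_symmDiff, h1, h2]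
    simp only [fMap, if_neg h1, if_neg h2, if_neg hΔ]
    refine legKey p hp i _ _ _ (∏ j ∈ S₁ ∩ S₂, (p j : ℤ)) ?_ ?_
    · have hpp := prodAux S₁ S₂ (fun j => (p j : ℤ))
      simp only [sqClassVal]
      cases ε₁ <;> cases ε₂ <;> norm_num <;>
        first
          | linear_combination hpp
          | linear_combination (-1 : ℤ) * hpp
    · exact notdvdAux p hp hinj i _ (by simp [h1])
end

section
/- Let D be an odd squarefree positive integer and let d be an odd positive squarefree integer dividing D. Then the equation W² = d + (8D/d)Z⁴ has a solution in Q_2 (with W, Z ∈ Q_2) if and only if d ≡ 1 (mod 8). -/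
private lemma padic_val_pow {p : ℕ} [Fact p.Prime] {x : ℚ_[p]} (hx : x ≠ 0) (n : ℕ) :
    (x ^ n).valuation = n * x.valuation := by
  induction n with
  | zero => simp [Padic.valuation_one]
  | succ n ih =>
    rw [pow_succ, Padic.valuation_mul (pow_ne_zero n hx) hx, ih]
    push_cast; ring

/-- For `D` an odd squarefree positive integer and `d` a positive divisor of `D`, the
equation `W² = d + (8D/d)Z⁴` has a solution in `ℚ₂` iff `d ≡ 1 (mod 8)`. -/
theorem stmt_13 (D d : ℕ) (hD : Squarefree D) (hDodd : Odd D) (hDpos : 0 < D)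
    (hdpos : 0 < d) (hdD : d ∣ D) :
    (∃ W Z : ℚ_[2], W ^ 2 = (d : ℚ_[2]) + ((8 * D / d : ℕ) : ℚ_[2]) * Z ^ 4) ↔
      d % 8 = 1 := by
  set m := D / d with hmdef
  have hDm : D = d * m := (Nat.div_mul_cancel hdD).symm.trans (mul_comm _ _)
  have hdm_odd : Odd d ∧ Odd m := Nat.odd_mul.mp (hDm ▸ hDodd)
  have hd_odd : d % 2 = 1 := Nat.odd_iff.mp hdm_odd.1
  have hm_odd : m % 2 = 1 := Nat.odd_iff.mp hdm_odd.2
  have hm0 : 0 < m := by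
    rcases Nat.eq_zero_or_pos m with h | h
    · rw [h, mul_zero] at hDm; omega
    · exact h
  have h8 : (8 * D / d : ℕ) = 8 * m := Nat.mul_div_assoc 8 hdD
  constructor
  · rintro ⟨W, Z, hWZ⟩
    rw [h8] at hWZ
    have hd0 : (d : ℚ_[2]) ≠ 0 := Nat.cast_ne_zero.mpr hdpos.ne'
    have hdval : (d : ℚ_[2]).valuation = 0 := by
      rw [Padic.valuation_natCast, padicValNat.eq_zero_of_not_dvd (by omega)]
      simp
    have hdnorm : ‖(d : ℚ_[2])‖ = 1 := by
      rw [Padic.norm_eq_zpow_neg_valuation hd0, hdval]; simp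
    have h8m0 : ((8 * m : ℕ) : ℚ_[2]) ≠ 0 := Nat.cast_ne_zero.mpr (by positivity)
    have h8mval : ((8 * m : ℕ) : ℚ_[2]).valuation = 3 := by
      rw [Padic.valuation_natCast]
      have h1 : padicValNat 2 (8 * m) = 3 := by
        rw [padicValNat.mul (by norm_num) hm0.ne',
          padicValNat.eq_zero_of_not_dvd (p := 2) (n := m) (by omega)]
        have : (8 : ℕ) = 2 ^ 3 := by norm_num
        rw [this, padicValNat.prime_pow]
      rw [h1]; simp
    -- Step 1 : ‖Z‖ ≤ 1
    have hZle : ‖Z‖ ≤ 1 := by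
      by_contra hZle
      have hZ0 : Z ≠ 0 := by rintro rfl; simp at hZle
      have hZval : Z.valuation ≤ -1 := by
        have := (Padic.norm_le_one_iff_val_nonneg Z).not.mp hZle
        omega
      set A := ((8 * m : ℕ) : ℚ_[2]) * Z ^ 4 with hA
      have hA0 : A ≠ 0 := mul_ne_zero h8m0 (pow_ne_zero 4 hZ0)
      have hAval : A.valuation = 3 + 4 * Z.valuation := by
        rw [hA, Padic.valuation_mul h8m0 (pow_ne_zero _ hZ0), h8mval,
          padic_val_pow hZ0]
        push_cast; ring
      have hAnorm : ‖A‖ = (2 : ℝ) ^ (-(3 + 4 * Z.valuation)) := by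
        rw [Padic.norm_eq_zpow_neg_valuation hA0, hAval]; norm_num
      have hAgt : 1 < ‖A‖ := by
        rw [hAnorm]
        have hpos : (0 : ℤ) < -(3 + 4 * Z.valuation) := by omega
        calc (1:ℝ) = 2 ^ (0:ℤ) := by norm_num
          _ < 2 ^ (-(3 + 4 * Z.valuation)) := by
              exact zpow_lt_zpow_right₀ (by norm_num) hpos
      have hne : ‖(d : ℚ_[2])‖ ≠ ‖A‖ := by rw [hdnorm]; exact hAgt.ne
      have hWnorm : ‖W ^ 2‖ = ‖A‖ := by
        rw [hWZ, Padic.add_eq_max_of_ne hne, hdnorm, max_eq_right hAgt.le]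
      have hW0 : W ≠ 0 := by
        rintro rfl
        rw [ne_eq, ← norm_eq_zero] at hA0
        simp at hWnorm
        exact hA0 hWnorm.symm
      have hveq : (W ^ 2).valuation = A.valuation := by
        have h1 := Padic.norm_eq_zpow_neg_valuation (pow_ne_zero 2 hW0)
        have h2 := Padic.norm_eq_zpow_neg_valuation hA0
        rw [h1, h2] at hWnorm
        have hb : ((2 : ℕ) : ℝ) = 2 := by norm_num
        rw [hb] at hWnorm
        have := zpow_right_injective₀ (by norm_num : (0:ℝ) < 2) (by norm_num) hWnorm
        omega
      rw [padic_val_pow hW0, hAval] at hveq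
      omega
    -- Step 2 : ‖W‖ ≤ 1
    have h8mle : ‖((8 * m : ℕ) : ℚ_[2])‖ ≤ 1 := by
      rw [show ((8 * m : ℕ) : ℚ_[2]) = ((8 * m : ℤ) : ℚ_[2]) by push_cast; ring]
      exact Padic.norm_int_le_one _
    have hWle : ‖W‖ ≤ 1 := by
      have hAle : ‖((8 * m : ℕ) : ℚ_[2]) * Z ^ 4‖ ≤ 1 := by
        rw [norm_mul, norm_pow]
        exact mul_le_one₀ h8mle (by positivity) (pow_le_one₀ (norm_nonneg _) hZle)
      have h2 : ‖W‖ ^ 2 ≤ 1 := by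
        rw [← norm_pow, hWZ]
        refine le_trans (Padic.nonarchimedean _ _) ?_
        rw [hdnorm]
        exact max_le le_rfl hAle
      nlinarith [norm_nonneg W]
    -- move to ℤ_[2]
    set w : ℤ_[2] := ⟨W, hWle⟩ with hw
    set z : ℤ_[2] := ⟨Z, hZle⟩ with hz
    have heq : w ^ 2 = (d : ℤ_[2]) + ((8 * m : ℕ) : ℤ_[2]) * z ^ 4 := by
      apply Subtype.ext
      push_cast
      exact_mod_cast hWZ
    have hmap := congrArg (PadicInt.toZModPow (p := 2) 3) heq
    rw [map_add, map_mul, map_pow, map_pow, map_natCast, map_natCast] at hmap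
    have h80 : ((8 * m : ℕ) : ZMod (2 ^ 3)) = 0 := by
      rw [ZMod.natCast_eq_zero_iff]
      exact ⟨m, by norm_num⟩
    rw [h80, zero_mul, add_zero] at hmap
    have hval : ((d : ZMod (2 ^ 3))).val = d % 8 := by
      rw [ZMod.val_natCast]; norm_num
    have key : ∀ x : ZMod (2 ^ 3), (x ^ 2).val % 2 = 1 → (x ^ 2).val = 1 := by decide
    have hres := key (PadicInt.toZModPow (p := 2) 3 w) (by rw [hmap, hval]; omega)
    rw [hmap, hval] at hres
    exact hres
  · intro h1
    have hF : ∃ zz : ℤ_[2], zz ^ 2 = (d : ℤ_[2]) := by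
      have hev : (Polynomial.X ^ 2 - Polynomial.C ((d : ℤ_[2]))).eval 1
          = ((1 - (d : ℤ)) : ℤ_[2]) := by push_cast; simp
      have hder : (Polynomial.X ^ 2 - Polynomial.C ((d : ℤ_[2]))).derivative.eval 1
          = 2 := by
        simp; norm_num
      have hnorm : ‖(Polynomial.X ^ 2 - Polynomial.C ((d : ℤ_[2]))).eval 1‖ <
          ‖(Polynomial.X ^ 2 - Polynomial.C ((d : ℤ_[2]))).derivative.eval 1‖ ^ 2 := by
        rw [hev, hder]
        have hdvd : (8 : ℤ) ∣ (1 - (d : ℤ)) := by omega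
        obtain ⟨c, hc⟩ := hdvd
        have h2n : ‖(2 : ℤ_[2])‖ = (2 : ℝ)⁻¹ := by
          have := PadicInt.norm_p (p := 2)
          simpa using this
        have heq2 : ((1 - (d : ℤ)) : ℤ_[2]) = 2 ^ 3 * (c : ℤ_[2]) := by
          have hcast := congrArg (fun k : ℤ => (k : ℤ_[2])) hc
          push_cast at hcast
          push_cast
          rw [hcast]; ring
        rw [heq2, norm_mul, norm_pow, h2n]
        have hc1 := PadicInt.norm_le_one (c : ℤ_[2])
        have hc0 := norm_nonneg (c : ℤ_[2])
        nlinarith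
      obtain ⟨zz, hzz, -⟩ := hensels_lemma hnorm
      refine ⟨zz, ?_⟩
      have : zz ^ 2 - (d : ℤ_[2]) = 0 := by simpa using hzz
      exact sub_eq_zero.mp this
    obtain ⟨zz, hzz⟩ := hF
    refine ⟨(zz : ℚ_[2]), 0, ?_⟩
    have := congrArg (fun x : ℤ_[2] => (x : ℚ_[2])) hzz
    push_cast at this
    simp [this]
end

section
/- Let D be a squarefree product of distinct odd primes, d a positive squarefree divisor of D, and p an odd prime dividing D but not dividing d. Then the equation W² = d + (8D/d)Z⁴ has a solution over Q_p if and only if the Legendre symbol (d/p) = 1. -/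
/-!
Since `p ∤ d` and `v_p(8D/d) = 1`, a solution with `v(Z) < 0` would have `(8D/d) Z⁴` dominating
`d`, so the even number `v(W²)` would equal the odd number `1 + 4 v(Z)`. Hence `Z`, and then `W`,
is integral, and reducing mod `p` gives `W̄² = d̄`. Conversely a square root of `d` mod `p` lifts
to `ℤ_p` by Hensel's lemma, `p` being odd, and gives the solution `(√d, 0)`.
-/

section

open Polynomial PadicInt

variable {p : ℕ} [Fact p.Prime]

theorem padicValNat_mul_div_eq_one_of_squarefree {n D d : ℕ} (hn : ¬ p ∣ n) (hD : Squarefree D)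
    (hpD : p ∣ D) (hdD : d ∣ D) (hpd : ¬ p ∣ d) : padicValNat p (n * D / d) = 1 := by
  have hp : p.Prime := Fact.out
  have hn0 : n ≠ 0 := by rintro rfl; exact hn (dvd_zero p)
  rw [padicValNat.div_of_dvd (hdD.mul_left n), padicValNat.mul hn0 hD.ne_zero,
    padicValNat.eq_zero_of_not_dvd hn, padicValNat.eq_zero_of_not_dvd hpd,
    ← Nat.factorization_def D hp, Nat.factorization_eq_one_of_squarefree hD hp hpD]

theorem Padic.valuation_add_of_norm_lt {x y : ℚ_[p]} (hx : x ≠ 0) (h : ‖y‖ < ‖x‖) :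
    (x + y).valuation = x.valuation := by
  have hp : (1 : ℝ) < p := mod_cast (Fact.out : p.Prime).one_lt
  have hxy : ‖x + y‖ = ‖x‖ := by rw [Padic.add_eq_max_of_ne h.ne', max_eq_left h.le]
  have hxy0 : x + y ≠ 0 := norm_pos_iff.mp (hxy ▸ norm_pos_iff.mpr hx)
  rw [Padic.norm_eq_zpow_neg_valuation hxy0, Padic.norm_eq_zpow_neg_valuation hx] at hxy
  exact neg_injective (zpow_right_injective₀ (by positivity) hp.ne' hxy)

theorem Padic.norm_le_one_of_sq_eq_add_mul_pow_four {d m W Z : ℚ_[p]} (hd : ‖d‖ = 1)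
    (hm : m.valuation = 1) (h : W ^ 2 = d + m * Z ^ 4) : ‖Z‖ ≤ 1 := by
  have hp : (1 : ℝ) < p := mod_cast (Fact.out : p.Prime).one_lt
  by_contra hZ
  have hvZ : Z.valuation < 0 := by
    rw [Padic.norm_le_one_iff_val_nonneg] at hZ; omega
  have hZ0 : Z ≠ 0 := by rintro rfl; simp at hvZ
  have hm0 : m ≠ 0 := by rintro rfl; simp at hm
  have hx0 : m * Z ^ 4 ≠ 0 := mul_ne_zero hm0 (pow_ne_zero 4 hZ0)
  have hvx : (m * Z ^ 4).valuation = 1 + 4 * Z.valuation := by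
    rw [Padic.valuation_mul hm0 (pow_ne_zero 4 hZ0), Padic.valuation_pow, hm]; push_cast; ring
  have hdx : ‖d‖ < ‖m * Z ^ 4‖ := by
    rw [hd, Padic.norm_eq_zpow_neg_valuation hx0]
    exact one_lt_zpow₀ hp (by omega)
  have hvW : 2 * W.valuation = 1 + 4 * Z.valuation := by
    rw [← hvx, ← Padic.valuation_add_of_norm_lt hx0 hdx, add_comm, ← h, Padic.valuation_pow]
    push_cast; ring
  omega

theorem PadicInt.toZMod_eq_zero_of_valuation_pos {x : ℤ_[p]} (hx : 0 < x.valuation) :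
    toZMod x = 0 := by
  have hx0 : x ≠ 0 := by rintro rfl; simp at hx
  rw [← RingHom.mem_ker, ker_toZMod, maximalIdeal_eq_span_p, ← pow_one (p : ℤ_[p]),
    mem_span_pow_iff_le_valuation x hx0]
  exact hx

theorem PadicInt.isSquare_toZMod_of_sq_eq_add_mul_pow_four {d m : ℤ_[p]} (hd : IsUnit d)
    (hm : m.valuation = 1) {W Z : ℚ_[p]} (h : W ^ 2 = d + m * Z ^ 4) : IsSquare (toZMod d) := by
  have hZ : ‖Z‖ ≤ 1 := Padic.norm_le_one_of_sq_eq_add_mul_pow_four (isUnit_iff.mp hd)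
    (by rw [valuation_coe, hm]; rfl) h
  let Z' : ℤ_[p] := ⟨Z, hZ⟩
  have hW : ‖W‖ ≤ 1 := by
    have : ‖W‖ ^ 2 ≤ 1 := by
      rw [← norm_pow, h]; exact norm_le_one (d + m * Z' ^ 4)
    exact (pow_le_one_iff_of_nonneg (norm_nonneg W) two_ne_zero).mp this
  let W' : ℤ_[p] := ⟨W, hW⟩
  have h' : W' ^ 2 = d + m * Z' ^ 4 := Subtype.ext (by push_cast; exact h)
  refine ⟨toZMod W', ?_⟩
  rw [← sq, ← map_pow, h', map_add, map_mul,
    toZMod_eq_zero_of_valuation_pos (x := m) (by omega), zero_mul, add_zero]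

theorem PadicInt.isSquare_of_isSquare_toZMod (hp2 : p ≠ 2) {u : ℤ_[p]} (hu : IsUnit u)
    (h : IsSquare (toZMod u)) : IsSquare u := by
  obtain ⟨y, hy⟩ := h
  obtain ⟨a, rfl⟩ := ZMod.ringHom_surjective (toZMod : ℤ_[p] →+* ZMod p) y
  have h2 : (2 : ZMod p) ≠ 0 := Ring.two_ne_zero (by rwa [ZMod.ringChar_zmod_n])
  have ha : IsUnit (toZMod a) := isUnit_of_mul_isUnit_left (hy ▸ (isUnit_map_iff _ _).mpr hu)
  have hderiv : ‖(aeval a) (derivative (X ^ 2 - C u))‖ = 1 := by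
    have : aeval a (derivative (X ^ 2 - C u)) = 2 * a := by simp [one_add_one_eq_two]
    rw [this, ← isUnit_iff, ← isUnit_map_iff toZMod, map_mul, map_ofNat]
    exact h2.isUnit.mul ha
  have heval : ‖(aeval a) (X ^ 2 - C u)‖ < 1 := by
    rw [← not_isUnit_iff, ← isUnit_map_iff toZMod]
    simp [hy, sq]
  obtain ⟨z, hz, -⟩ := hensels_lemma (F := X ^ 2 - C u) (a := a) (by rwa [hderiv, one_pow])
  exact ⟨z, by simpa [sub_eq_zero, sq, eq_comm] using hz⟩

end

theorem stmt_14_general (D d p : ℕ) [Fact p.Prime] (hp2 : p ≠ 2)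
    (hD : Squarefree D) (hdD : d ∣ D) (hpD : p ∣ D) (hpd : ¬ p ∣ d) :
    (∃ W Z : ℚ_[p], W ^ 2 = (d : ℚ_[p]) + ((8 * D / d : ℕ) : ℚ_[p]) * Z ^ 4) ↔
      legendreSym p d = 1 := by
  have hp : p.Prime := Fact.out
  have hd : IsUnit (d : ℤ_[p]) := by
    rw [← isUnit_map_iff PadicInt.toZMod, map_natCast, isUnit_iff_ne_zero, Ne,
      ZMod.natCast_eq_zero_iff]
    exact hpd
  have h8 : ¬ p ∣ 8 := fun h ↦ hp2 <|
    (Nat.prime_dvd_prime_iff_eq hp Nat.prime_two).mp (hp.dvd_of_dvd_pow (n := 3) h)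
  have hm : ((8 * D / d : ℕ) : ℤ_[p]).valuation = 1 := by
    rw [← Nat.cast_inj (R := ℤ), ← PadicInt.valuation_coe, PadicInt.coe_natCast,
      Padic.valuation_natCast, padicValNat_mul_div_eq_one_of_squarefree h8 hD hpD hdD hpd,
      Nat.cast_one]
  rw [legendreSym.eq_one_iff' p (by rwa [Ne, ZMod.natCast_eq_zero_iff]),
    ← map_natCast (PadicInt.toZMod (p := p))]
  constructor
  · rintro ⟨W, Z, h⟩
    exact PadicInt.isSquare_toZMod_of_sq_eq_add_mul_pow_four hd hm (by simpa using h)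
  · intro h
    obtain ⟨w, hw⟩ := PadicInt.isSquare_of_isSquare_toZMod hp2 hd h
    exact ⟨w, 0, by simpa [sq] using congrArg ((↑) : ℤ_[p] → ℚ_[p]) hw.symm⟩

/-- For `D` a squarefree product of distinct odd primes, `d` a positive squarefree divisor
of `D`, and `p` an odd prime dividing `D` but not `d`, the equation `W² = d + (8D/d)Z⁴`
has a solution in `ℚ_p` iff the Legendre symbol `(d/p) = 1`. -/
theorem stmt_14 (D d p : ℕ) [Fact p.Prime] (hp2 : p ≠ 2)
    (hD : Squarefree D) (hDodd : Odd D) (hDpos : 0 < D)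
    (hdpos : 0 < d) (hdD : d ∣ D) (hpD : p ∣ D) (hpd : ¬ p ∣ d) :
    (∃ W Z : ℚ_[p], W ^ 2 = (d : ℚ_[p]) + ((8 * D / d : ℕ) : ℚ_[p]) * Z ^ 4) ↔
      legendreSym p d = 1 :=
  stmt_14_general D d p hp2 hD hdD hpD hpd
end

section
/- Let D be a squarefree product of distinct odd primes, d a positive squarefree divisor of D, and p an odd prime dividing d. Then the equation W² = d + (8D/d)Z⁴ has a solution over Q_p if and only if the Legendre symbol ((2D·d/p²)/p) = 1, i.e., the Legendre symbol of the p-free part of 2D·d modulo p equals 1. -/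
section Aux

variable {p : ℕ} [hpfact : Fact p.Prime]

private lemma aux_norm_two (hp2 : p ≠ 2) : ‖(2 : ℤ_[p])‖ = 1 := by
  refine le_antisymm (PadicInt.norm_le_one _) ?_
  by_contra h
  push_neg at h
  have h2 : ((2 : ℤ) : ℤ_[p]) = (2 : ℤ_[p]) := by norm_cast
  have hdvd : (p : ℤ) ∣ 2 := (PadicInt.norm_int_lt_one_iff_dvd 2).mp (by rwa [h2])
  have : p ∣ 2 := by exact_mod_cast hdvd
  exact hp2 ((Nat.prime_dvd_prime_iff_eq hpfact.out Nat.prime_two).mp this)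

/-- Hensel lifting of square roots for odd `p`. -/
private lemma aux_exists_sqrt (hp2 : p ≠ 2) {x a : ℤ_[p]} (ha : ‖a‖ = 1)
    (hxa : ‖x - a ^ 2‖ < 1) : ∃ y : ℤ_[p], y ^ 2 = x ∧ ‖y‖ = 1 := by
  set F : Polynomial ℤ_[p] := Polynomial.X ^ 2 - Polynomial.C x with hF
  have hFe : ∀ b : ℤ_[p], F.eval b = b ^ 2 - x := by intro b; simp [hF]
  have hFd : ∀ b : ℤ_[p], F.derivative.eval b = 2 * b := by
    intro b
    simp [hF, Polynomial.derivative_sub, Polynomial.derivative_X_pow, one_add_one_eq_two]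
  have hnorm : ‖F.eval a‖ < ‖F.derivative.eval a‖ ^ 2 := by
    rw [hFe, hFd, norm_sub_rev, norm_mul, aux_norm_two hp2, ha]
    simpa using hxa
  obtain ⟨z, hz, -, hz2, -⟩ := hensels_lemma hnorm
  refine ⟨z, ?_, ?_⟩
  · have h0 : z ^ 2 - x = 0 := by rw [← hFe]; exact hz
    exact sub_eq_zero.mp h0
  · simp only [Polynomial.coe_aeval_eq_eval] at hz2
    rw [hFd, hFd, norm_mul, norm_mul, aux_norm_two hp2, ha, one_mul,
      one_mul] at hz2
    exact hz2

private lemma aux_isSquare_mul_sq_iff {F : Type*} [Field F] {x y : F} (hy : y ≠ 0) :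
    IsSquare (x * y ^ 2) ↔ IsSquare x := by
  constructor
  · rintro ⟨s, hs⟩
    refine ⟨s / y, ?_⟩
    field_simp
    linear_combination hs
  · rintro ⟨s, hs⟩
    exact ⟨s * y, by rw [hs]; ring⟩

private lemma aux_val_pow (x : ℚ_[p]) (hx : x ≠ 0) (n : ℕ) :
    (x ^ n).valuation = n * x.valuation := by
  induction n with
  | zero => simp [Padic.valuation_one]
  | succ k ih =>
      rw [pow_succ, Padic.valuation_mul (pow_ne_zero _ hx) hx, ih]
      push_cast
      ring

private lemma aux_val_neg (x : ℚ_[p]) : (-x).valuation = x.valuation := by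
  rcases eq_or_ne x 0 with rfl | hx
  · simp
  · have h1 : (-x) = (-1 : ℤ) * x := by push_cast; ring
    rw [h1, Padic.valuation_mul (by norm_num) hx, Padic.valuation_intCast]
    simp [padicValInt]

private lemma aux_val_div (x y : ℚ_[p]) (hx : x ≠ 0) (hy : y ≠ 0) :
    (x / y).valuation = x.valuation - y.valuation := by
  have h : x / y * y = x := div_mul_cancel₀ x hy
  have := Padic.valuation_mul (show x / y ≠ 0 from div_ne_zero hx hy) hy
  rw [h] at this
  omega

private lemma aux_norm_lt_one {x : ℚ_[p]} (hx : x ≠ 0) (h : 0 < x.valuation) : ‖x‖ < 1 := by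
  rw [Padic.norm_eq_zpow_neg_valuation hx]
  have hp1 : (1 : ℝ) < (p : ℝ) := by
    exact_mod_cast hpfact.out.one_lt
  exact zpow_lt_one_of_neg₀ hp1 (by omega)

private lemma aux_norm_eq_one {x : ℚ_[p]} (hx : x ≠ 0) (h : x.valuation = 0) : ‖x‖ = 1 := by
  rw [Padic.norm_eq_zpow_neg_valuation hx, h]
  simp

end Aux

/-- For `D` a squarefree product of distinct odd primes, `d` a positive squarefree divisor
of `D`, and `p` an odd prime dividing `d`, the equation `W² = d + (8D/d)Z⁴` has a solution
in `ℚ_p` iff the Legendre symbol of the `p`-free part of `2Dd`, namely `2Dd/p²`, is `1`. -/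
theorem stmt_15 (D d p : ℕ) [Fact p.Prime] (hp2 : p ≠ 2)
    (hD : Squarefree D) (hDodd : Odd D) (hDpos : 0 < D)
    (hdpos : 0 < d) (hdD : d ∣ D) (hpd : p ∣ d) :
    (∃ W Z : ℚ_[p], W ^ 2 = (d : ℚ_[p]) + ((8 * D / d : ℕ) : ℚ_[p]) * Z ^ 4) ↔
      legendreSym p ((2 * D * d / p ^ 2 : ℕ) : ℤ) = 1 := by
  have hp : p.Prime := Fact.out
  have hp0 : p ≠ 0 := hp.ne_zero
  have hd_sf : Squarefree d := hD.squarefree_of_dvd hdD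
  obtain ⟨d₀, hd₀⟩ := hpd
  obtain ⟨D₀, hD₀⟩ := dvd_trans ⟨d₀, hd₀⟩ hdD
  have hpd₀ : ¬ p ∣ d₀ := by
    rintro ⟨c, hc⟩
    exact hp.not_isUnit (hd_sf p ⟨c, by rw [hd₀, hc]; ring⟩)
  have hpD₀ : ¬ p ∣ D₀ := by
    rintro ⟨c, hc⟩
    exact hp.not_isUnit (hD p ⟨c, by rw [hD₀, hc]; ring⟩)
  have hp2' : ¬ p ∣ 2 := fun h => hp2 ((Nat.prime_dvd_prime_iff_eq hp Nat.prime_two).mp h)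
  set q : ℕ := 8 * D / d with hq
  have hd8D : d ∣ 8 * D := hdD.mul_left 8
  have hqd : q * d = 8 * D := Nat.div_mul_cancel hd8D
  have hqd₀ : q * d₀ = 8 * D₀ := by
    have h1 : p * (q * d₀) = p * (8 * D₀) := by
      calc p * (q * d₀) = q * d := by rw [hd₀]; ring
        _ = 8 * D := hqd
        _ = p * (8 * D₀) := by rw [hD₀]; ring
    exact Nat.eq_of_mul_eq_mul_left hp.pos h1
  have hq0 : q ≠ 0 := by
    intro h
    rw [h, zero_mul] at hqd
    omega
  have hpq : ¬ p ∣ q := by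
    intro h
    have h8 : p ∣ 8 * D₀ := hqd₀ ▸ h.mul_right d₀
    rcases hp.dvd_mul.mp h8 with h8' | hD'
    · have : p ∣ 2 := hp.dvd_of_dvd_pow (n := 3) (by norm_num [show (8:ℕ) = 2^3 by norm_num] at h8' ⊢; exact h8')
      exact hp2' this
    · exact hpD₀ hD'
  set t : ℕ := 2 * D * d / p ^ 2 with htdef
  have ht : t = 2 * D₀ * d₀ := by
    have h1 : 2 * D * d = p ^ 2 * (2 * D₀ * d₀) := by rw [hD₀, hd₀]; ring
    rw [htdef, h1, Nat.mul_div_cancel_left _ (pow_pos hp.pos 2)]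
  have hpt : ¬ p ∣ t := by
    rw [ht]
    intro h
    rcases hp.dvd_mul.mp h with h1 | h1
    · rcases hp.dvd_mul.mp h1 with h2 | h2
      · exact hp2' h2
      · exact hpD₀ h2
    · exact hpd₀ h1
  -- the residue identity
  have hnatid : q * d₀ ^ 2 = 4 * t := by
    rw [ht, pow_two, ← mul_assoc, hqd₀]; ring
  have hd₀0 : (d₀ : ZMod p) ≠ 0 := by
    rw [Ne, ZMod.natCast_eq_zero_iff]; exact hpd₀
  have h20 : (2 : ZMod p) ≠ 0 := by
    have : ((2 : ℕ) : ZMod p) ≠ 0 := by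
      rw [Ne, ZMod.natCast_eq_zero_iff]; exact hp2'
    simpa using this
  have hiff : IsSquare ((q : ZMod p)) ↔ IsSquare ((t : ZMod p)) := by
    have hcast : (q : ZMod p) * (d₀ : ZMod p) ^ 2 = (t : ZMod p) * (2 : ZMod p) ^ 2 := by
      have := congrArg (Nat.cast : ℕ → ZMod p) hnatid
      push_cast at this
      linear_combination this
    rw [← aux_isSquare_mul_sq_iff hd₀0, hcast, aux_isSquare_mul_sq_iff h20]
  have ht0 : ((t : ℤ) : ZMod p) ≠ 0 := by
    rw [Int.cast_natCast, Ne, ZMod.natCast_eq_zero_iff]; exact hpt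
  rw [legendreSym.eq_one_iff p ht0, Int.cast_natCast, ← hiff]
  -- now: solvability ↔ IsSquare (q : ZMod p)
  have hpd2 : ¬ p ^ 2 ∣ d := by
    rintro ⟨c, hc⟩
    exact hp.not_isUnit (hd_sf p ⟨c, by rw [hc]; ring⟩)
  have hvald : padicValNat p d = 1 := by
    have h1 : 1 ≤ padicValNat p d := one_le_padicValNat_of_dvd hdpos.ne' ⟨d₀, hd₀⟩
    have h2 : ¬ 2 ≤ padicValNat p d := by
      intro h
      exact hpd2 ((padicValNat_dvd_iff_le hdpos.ne').mpr h)
    omega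
  set c : ℚ_[p] := (d : ℚ_[p]) with hcdef
  set u : ℚ_[p] := ((q : ℕ) : ℚ_[p]) with hudef
  have hc0 : c ≠ 0 := Nat.cast_ne_zero.mpr hdpos.ne'
  have hu0 : u ≠ 0 := Nat.cast_ne_zero.mpr hq0
  have hvc : c.valuation = 1 := by
    rw [hcdef, Padic.valuation_natCast, hvald]; norm_num
  have hvu : u.valuation = 0 := by
    rw [hudef, Padic.valuation_natCast, padicValNat.eq_zero_of_not_dvd hpq]; norm_num
  constructor
  · rintro ⟨W, Z, hWZ⟩
    have hZ0 : Z ≠ 0 := by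
      rintro rfl
      have hWc : W ^ 2 = c := by rw [hWZ]; ring
      have hW0 : W ≠ 0 := by
        intro h
        rw [h] at hWc
        exact hc0 (by rw [← hWc]; ring)
      have h1 : (W ^ 2).valuation = c.valuation := by rw [hWc]
      rw [aux_val_pow W hW0 2, hvc] at h1
      omega
    have hW0 : W ≠ 0 := by
      rintro rfl
      have hZ4 : u * Z ^ 4 = -c := by linear_combination -hWZ
      have h1 : (u * Z ^ 4).valuation = 1 := by rw [hZ4, aux_val_neg, hvc]
      rw [Padic.valuation_mul hu0 (pow_ne_zero _ hZ0), hvu,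
        aux_val_pow Z hZ0 4] at h1
      omega
    have hA0 : W ^ 2 ≠ 0 := pow_ne_zero _ hW0
    have hB0 : -(u * Z ^ 4) ≠ 0 := neg_ne_zero.mpr (mul_ne_zero hu0 (pow_ne_zero _ hZ0))
    have hvA : (W ^ 2).valuation = 2 * W.valuation := by
      rw [aux_val_pow W hW0 2]; norm_num
    have hvB : (-(u * Z ^ 4)).valuation = 4 * Z.valuation := by
      rw [aux_val_neg, Padic.valuation_mul hu0 (pow_ne_zero _ hZ0), hvu,
        aux_val_pow Z hZ0 4]
      norm_num
    have hcAB : c = W ^ 2 + -(u * Z ^ 4) := by linear_combination -hWZ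
    have r1 : min (W ^ 2).valuation (-(u * Z ^ 4)).valuation ≤ (1 : ℤ) := by
      rw [← hvc, hcAB]
      exact Padic.le_valuation_add (by rw [← hcAB]; exact hc0)
    have r2 : min (1 : ℤ) (-(u * Z ^ 4)).valuation ≤ (W ^ 2).valuation := by
      have h := Padic.le_valuation_add (x := c) (y := u * Z ^ 4)
        (by rw [← hWZ]; exact hA0)
      rw [← hWZ, hvc] at h
      rwa [aux_val_neg]
    have hsum3 : c + -(W ^ 2) = -(u * Z ^ 4) := by linear_combination -hWZ
    have r3 : min (1 : ℤ) (W ^ 2).valuation ≤ (-(u * Z ^ 4)).valuation := by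
      have h := Padic.le_valuation_add (x := c) (y := -(W ^ 2))
        (by rw [hsum3]; exact hB0)
      rw [hsum3, hvc, aux_val_neg] at h
      exact h
    have hvWZ : 2 * W.valuation = 4 * Z.valuation := by
      rw [hvA, hvB] at r1 r2 r3
      omega
    have hW'0 : W / Z ^ 2 ≠ 0 := div_ne_zero hW0 (pow_ne_zero _ hZ0)
    have hvW' : (W / Z ^ 2).valuation = 0 := by
      rw [aux_val_div W (Z ^ 2) hW0 (pow_ne_zero _ hZ0), aux_val_pow Z hZ0 2]
      omega
    have hkey : (W / Z ^ 2) ^ 2 - u = c / Z ^ 4 := by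
      field_simp
      linear_combination hWZ
    have hck0 : c / Z ^ 4 ≠ 0 := div_ne_zero hc0 (pow_ne_zero _ hZ0)
    have hvck : (c / Z ^ 4).valuation = 1 - 4 * Z.valuation := by
      rw [aux_val_div c (Z ^ 4) hc0 (pow_ne_zero _ hZ0), hvc, aux_val_pow Z hZ0 4]
      norm_num
    have hZneg : Z.valuation ≤ 0 := by
      by_contra hb
      push_neg at hb
      have hsum : (W / Z ^ 2) ^ 2 + (-u) = c / Z ^ 4 := by rw [← hkey]; ring
      have h0 : (0 : ℤ) ≤ (c / Z ^ 4).valuation := by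
        rw [← hsum]
        have h := Padic.le_valuation_add (x := (W / Z ^ 2) ^ 2) (y := -u)
          (by rw [hsum]; exact hck0)
        rw [aux_val_pow _ hW'0 2, hvW', aux_val_neg, hvu] at h
        omega
      omega
    have hdiffval : 0 < ((W / Z ^ 2) ^ 2 - u).valuation := by
      rw [hkey, hvck]; omega
    have hdiff0 : (W / Z ^ 2) ^ 2 - u ≠ 0 := by rw [hkey]; exact hck0
    have hnormdiff : ‖(W / Z ^ 2) ^ 2 - u‖ < 1 := aux_norm_lt_one hdiff0 hdiffval
    have hnormW' : ‖W / Z ^ 2‖ ≤ 1 := le_of_eq (aux_norm_eq_one hW'0 hvW')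
    set β : ℤ_[p] := ⟨W / Z ^ 2, hnormW'⟩ with hβdef
    set u' : ℤ_[p] := ((q : ℕ) : ℤ_[p]) with hu'def
    have hβcast : ((β ^ 2 - u' : ℤ_[p]) : ℚ_[p]) = (W / Z ^ 2) ^ 2 - u := by
      push_cast [hβdef, hu'def, hudef]
      rfl
    have hβlt : ‖β ^ 2 - u'‖ < 1 := by
      rw [PadicInt.norm_def, hβcast]
      exact hnormdiff
    have hker : PadicInt.toZMod (β ^ 2 - u') = 0 := by
      have hmem : β ^ 2 - u' ∈ IsLocalRing.maximalIdeal ℤ_[p] := by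
        rw [PadicInt.maximalIdeal_eq_span_p, Ideal.mem_span_singleton,
          ← PadicInt.norm_lt_one_iff_dvd]
        exact hβlt
      rw [← PadicInt.ker_toZMod] at hmem
      exact hmem
    have hfin : PadicInt.toZMod β * PadicInt.toZMod β = (q : ZMod p) := by
      have h1 := hker
      rw [map_sub, sub_eq_zero] at h1
      rw [← pow_two, ← map_pow, h1, hu'def, map_natCast]
    exact ⟨PadicInt.toZMod β, hfin.symm⟩
  · -- backward: construct a solution via Hensel
    intro hsq
    obtain ⟨s, hs⟩ := hsq
    have hq0' : (q : ZMod p) ≠ 0 := by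
      rw [Ne, ZMod.natCast_eq_zero_iff]; exact hpq
    have hs0 : s ≠ 0 := by
      intro h
      rw [h, mul_zero] at hs
      exact hq0' hs
    set a : ℤ_[p] := ((s.val : ℕ) : ℤ_[p]) with hadef
    have hps : ¬ p ∣ s.val := by
      intro h
      have : (s.val : ZMod p) = 0 := (ZMod.natCast_eq_zero_iff _ _).mpr h
      rw [ZMod.natCast_val, ZMod.cast_id] at this
      exact hs0 this
    have ha1 : ‖a‖ = 1 := by
      refine le_antisymm (PadicInt.norm_le_one _) ?_
      by_contra h
      push_neg at h
      have h2 : ((s.val : ℤ) : ℤ_[p]) = a := by rw [hadef]; push_cast; ring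
      have := (PadicInt.norm_int_lt_one_iff_dvd (s.val : ℤ)).mp (by rwa [h2])
      exact hps (by exact_mod_cast this)
    have hqa : ‖((q : ℤ_[p])) - a ^ 2‖ < 1 := by
      have hrw : ((q : ℤ_[p])) - a ^ 2 = (((q : ℤ) - (s.val : ℤ) ^ 2 : ℤ) : ℤ_[p]) := by
        rw [hadef]; push_cast; ring
      rw [hrw, PadicInt.norm_int_lt_one_iff_dvd]
      have h0 : (((q : ℤ) - (s.val : ℤ) ^ 2 : ℤ) : ZMod p) = 0 := by
        push_cast
        rw [ZMod.natCast_val, ZMod.cast_id, hs]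
        ring
      exact (ZMod.intCast_zmod_eq_zero_iff_dvd _ p).mp h0
    obtain ⟨w, hw, hwn⟩ := aux_exists_sqrt hp2 ha1 hqa
    have h2a : ‖(2 : ℤ_[p]) * a‖ = 1 := by
      rw [norm_mul, aux_norm_two hp2, ha1, one_mul]
    have hdnorm : ‖((d : ℕ) : ℤ_[p])‖ < 1 := by
      have h2 : ((d : ℤ) : ℤ_[p]) = ((d : ℕ) : ℤ_[p]) := by push_cast; ring
      rw [← h2, PadicInt.norm_int_lt_one_iff_dvd]
      exact_mod_cast Int.natCast_dvd_natCast.mpr ⟨d₀, hd₀⟩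
    have hx2 : ‖(4 * (q : ℤ_[p]) - (d : ℤ_[p])) - ((2 : ℤ_[p]) * a) ^ 2‖ < 1 := by
      have hrw : (4 * (q : ℤ_[p]) - (d : ℤ_[p])) - ((2 : ℤ_[p]) * a) ^ 2
          = 4 * ((q : ℤ_[p]) - a ^ 2) - (d : ℤ_[p]) := by ring
      rw [hrw]
      have hle : ‖4 * ((q : ℤ_[p]) - a ^ 2) - ((d : ℕ) : ℤ_[p])‖
          ≤ max ‖4 * ((q : ℤ_[p]) - a ^ 2)‖ ‖((d : ℕ) : ℤ_[p])‖ := by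
        rw [sub_eq_add_neg]
        refine le_trans (PadicInt.nonarchimedean _ _) ?_
        rw [norm_neg]
      refine lt_of_le_of_lt hle ?_
      rw [max_lt_iff]
      constructor
      · calc ‖(4 : ℤ_[p]) * ((q : ℤ_[p]) - a ^ 2)‖ ≤ 1 * ‖(q : ℤ_[p]) - a ^ 2‖ := by
              rw [norm_mul]
              exact mul_le_mul_of_nonneg_right (PadicInt.norm_le_one _) (norm_nonneg _)
          _ < 1 := by rwa [one_mul]
      · exact hdnorm
    obtain ⟨v, hv, hvn⟩ := aux_exists_sqrt hp2 h2a hx2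
    -- now build the solution in ℚ_p
    have hw0 : ((w : ℚ_[p])) ≠ 0 := by
      intro h
      have : ‖(w : ℚ_[p])‖ = 0 := by rw [h]; simp
      rw [← PadicInt.norm_def, hwn] at this
      norm_num at this
    have hwq : ((w : ℚ_[p])) ^ 2 = u := by
      rw [hudef]
      exact_mod_cast congrArg (fun z : ℤ_[p] => (z : ℚ_[p])) hw
    have hvq : ((v : ℚ_[p])) ^ 2 = 4 * u - c := by
      rw [hudef, hcdef]
      exact_mod_cast congrArg (fun z : ℤ_[p] => (z : ℚ_[p])) hv
    refine ⟨(w : ℚ_[p]) + c / (4 * (w : ℚ_[p])), (v : ℚ_[p]) / (2 * (w : ℚ_[p])), ?_⟩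
    have h4 : (4 : ℚ_[p]) ≠ 0 := by norm_num
    have h2 : (2 : ℚ_[p]) ≠ 0 := by norm_num
    field_simp
    linear_combination (16 *
        (16 * ((w : ℚ_[p]) ^ 4 + (w : ℚ_[p]) ^ 2 * u + u ^ 2)
          - 8 * c * ((w : ℚ_[p]) ^ 2 + u) + c ^ 2)) * hwq
      + (-16 * u * ((v : ℚ_[p]) ^ 2 + (4 * u - c))) * hvq
end
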